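/- (Theorem 3, abstract form) Let N ≥ 1. Let h : [0,1]^N → [0,1]^N satisfy h(1,…,1) = (1,…,1) and, for some N×N matrix M with nonnegative entries, 1 − h_i(z) ≤ ∑_{j=1}^N M_{ij}(1 − z_j) for all z ∈ [0,1]^N and all i. Suppose there exists a vector b with b_j > 0 for all j such that (M b)_i < b_i for all i. Let K : [0,1]^N → ℝ satisfy 0 < K(z) ≤ 1 and 1 − K(z) ≤ C ∑_{j=1}^N (1 − z_j) for all z ∈ [0,1]^N, for some constant C ≥ 0. Let X : [0,1]^N → ℝ be continuous at (1,…,1) with X(1,…,1) = 1 and satisfy X(z) = K(z) X(h(z)) for all z ∈ [0,1]^N. Then for every z ∈ [0,1]^N the iterates h^{(m)}(z) (with h^{(0)}(z) = z and h^{(m)}(z) = h(h^{(m−1)}(z))) converge to (1,…,1), the infinite product ∏_{m=0}^∞ K(h^{(m)}(z)) converges, and X(z) = ∏_{m=0}^∞ K(h^{(m)}(z)). -/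

import Mathlib

open Filter Set Topology

/-!
If `1 - z ≤ c • b` componentwise, then the domination by `M` together with `M b ≤ ρ b`
(`ρ < 1`) gives `1 - h^[m] z ≤ c ρ^m • b`, so the iterates converge geometrically to `1`.
Iterating the functional equation gives `X z = (∏_{m<n} K (h^[m] z)) · X (h^[n] z)`; the
partial products are antitone and nonnegative because the factors lie in `(0, 1]`, and `X (h^[n] z) → X 1 = 1`
by continuity of `X` at `1`.
-/

lemma Real.multipliable_of_nonneg_of_le_one {ι : Type*} {f : ι → ℝ}
    (h0 : ∀ i, 0 ≤ f i) (h1 : ∀ i, f i ≤ 1) : Multipliable f :=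
  ⟨_, tendsto_atTop_ciInf (Finset.prod_anti_set_of_le_one h0 h1)
    ⟨0, by rintro _ ⟨s, rfl⟩; exact Finset.prod_nonneg fun i _ => h0 i⟩⟩

section FunctionalEquation

variable {α R : Type*} [CommMonoid R] {S : Set α} {h : α → α}
  {K X : α → R}

lemma eq_prod_range_mul_iterate (hmap : MapsTo h S S) (hX : ∀ z ∈ S, X z = K z * X (h z))
    {z : α} (hz : z ∈ S) (n : ℕ) :
    X z = (∏ m ∈ Finset.range n, K (h^[m] z)) * X (h^[n] z) := by
  induction n with
  | zero => simp
  | succ n ih =>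
    rw [Finset.prod_range_succ, ih, hX _ (hmap.iterate n hz), Function.iterate_succ_apply',
      mul_assoc]

lemma eq_tprod_of_tendsto_iterate [TopologicalSpace α] [TopologicalSpace R] [ContinuousMul R] [T2Space R]
    (hmap : MapsTo h S S) (hX : ∀ z ∈ S, X z = K z * X (h z)) {p : α}
    (hXcont : ContinuousWithinAt X S p) (hXp : X p = 1) {z : α} (hz : z ∈ S)
    (hlim : Tendsto (fun m => h^[m] z) atTop (𝓝 p))
    (hK : Multipliable fun m => K (h^[m] z)) :
    X z = ∏' m, K (h^[m] z) := by
  have hlimS : Tendsto (fun m => h^[m] z) atTop (𝓝[S] p) :=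
    tendsto_nhdsWithin_iff.2 ⟨hlim, Eventually.of_forall fun m => hmap.iterate m hz⟩
  have hXlim : Tendsto (fun n => X (h^[n] z)) atTop (𝓝 1) := hXp ▸ hXcont.tendsto.comp hlimS
  have hprod : Tendsto (fun n => (∏ m ∈ Finset.range n, K (h^[m] z)) * X (h^[n] z)) atTop
      (𝓝 ((∏' m, K (h^[m] z)) * 1)) :=
    hK.hasProd.tendsto_prod_nat.mul hXlim
  rw [mul_one] at hprod
  exact tendsto_nhds_unique tendsto_const_nhds
    (hprod.congr fun n => (eq_prod_range_mul_iterate hmap hX hz n).symm)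

end FunctionalEquation

section Domination

variable {ι : Type*} [Fintype ι] {b : ι → ℝ}

lemma exists_nonneg_forall_le_mul (v : ι → ℝ) (hb : ∀ i, 0 < b i) :
    ∃ c, 0 ≤ c ∧ ∀ i, v i ≤ c * b i := by
  obtain ⟨c, hc⟩ := Finite.bddAbove_range fun i => v i / b i
  exact ⟨max 0 c, le_max_left _ _, fun i =>
    (div_le_iff₀ (hb i)).1 ((hc ⟨i, rfl⟩).trans (le_max_right _ _))⟩

lemma exists_lt_one_forall_le_mul {v : ι → ℝ} (hb : ∀ i, 0 < b i) (hvb : ∀ i, v i < b i) :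
    ∃ ρ, 0 ≤ ρ ∧ ρ < 1 ∧ ∀ i, v i ≤ ρ * b i := by
  rcases isEmpty_or_nonempty ι with hι | hι
  · exact ⟨0, le_rfl, one_pos, fun i => isEmptyElim i⟩
  obtain ⟨i₀, hi₀⟩ := Finite.exists_max fun i => v i / b i
  refine ⟨max 0 (v i₀ / b i₀), le_max_left _ _,
    max_lt one_pos ((div_lt_one (hb i₀)).2 (hvb i₀)), fun i => ?_⟩
  exact (div_le_iff₀ (hb i)).1 ((hi₀ i).trans (le_max_right _ _))

variable {h : (ι → ℝ) → (ι → ℝ)} {M : Matrix ι ι ℝ} {ρ : ℝ}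

lemma one_sub_apply_le_mul (hM : ∀ i j, 0 ≤ M i j)
    (hdom : ∀ z ∈ Icc (0 : ι → ℝ) 1, ∀ i, 1 - h z i ≤ ∑ j, M i j * (1 - z j))
    (hMb : ∀ i, M.mulVec b i ≤ ρ * b i) {t : ℝ} (ht : 0 ≤ t) {z : ι → ℝ}
    (hz : z ∈ Icc (0 : ι → ℝ) 1) (hzt : ∀ j, 1 - z j ≤ t * b j) (i : ι) :
    1 - h z i ≤ t * ρ * b i :=
  calc 1 - h z i ≤ ∑ j, M i j * (1 - z j) := hdom z hz i
    _ ≤ ∑ j, M i j * (t * b j) :=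
      Finset.sum_le_sum fun j _ => mul_le_mul_of_nonneg_left (hzt j) (hM i j)
    _ = t * M.mulVec b i := by
      simp only [Matrix.mulVec, dotProduct, Finset.mul_sum]
      exact Finset.sum_congr rfl fun j _ => by ring
    _ ≤ t * (ρ * b i) := mul_le_mul_of_nonneg_left (hMb i) ht
    _ = t * ρ * b i := (mul_assoc _ _ _).symm

lemma one_sub_iterate_le_mul_pow (hmap : MapsTo h (Icc 0 1) (Icc 0 1))
    (hM : ∀ i j, 0 ≤ M i j)
    (hdom : ∀ z ∈ Icc (0 : ι → ℝ) 1, ∀ i, 1 - h z i ≤ ∑ j, M i j * (1 - z j))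
    (hρ : 0 ≤ ρ) (hMb : ∀ i, M.mulVec b i ≤ ρ * b i) {c : ℝ} (hc : 0 ≤ c) {z : ι → ℝ}
    (hz : z ∈ Icc (0 : ι → ℝ) 1) (hzc : ∀ j, 1 - z j ≤ c * b j) (m : ℕ) (i : ι) :
    1 - h^[m] z i ≤ c * ρ ^ m * b i := by
  induction m generalizing i with
  | zero => simpa using hzc i
  | succ m ih =>
    rw [Function.iterate_succ_apply', pow_succ, ← mul_assoc]
    exact one_sub_apply_le_mul hM hdom hMb (by positivity) (hmap.iterate m hz) ih i

lemma tendsto_iterate_nhds_one (hmap : MapsTo h (Icc 0 1) (Icc 0 1))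
    (hM : ∀ i j, 0 ≤ M i j)
    (hdom : ∀ z ∈ Icc (0 : ι → ℝ) 1, ∀ i, 1 - h z i ≤ ∑ j, M i j * (1 - z j))
    (hb : ∀ j, 0 < b j) (hMb : ∀ i, M.mulVec b i < b i) {z : ι → ℝ}
    (hz : z ∈ Icc (0 : ι → ℝ) 1) :
    Tendsto (fun m => h^[m] z) atTop (𝓝 1) := by
  obtain ⟨ρ, hρ0, hρ1, hρ⟩ := exists_lt_one_forall_le_mul hb hMb
  obtain ⟨c, hc0, hc⟩ := exists_nonneg_forall_le_mul (1 - z) hb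
  rw [tendsto_pi_nhds]
  intro i
  have hbound : Tendsto (fun m => 1 - c * ρ ^ m * b i) atTop (𝓝 1) := by
    simpa using tendsto_const_nhds.sub
      (((tendsto_pow_atTop_nhds_zero_of_lt_one hρ0 hρ1).const_mul c).mul_const (b i))
  refine tendsto_of_tendsto_of_tendsto_of_le_of_le hbound tendsto_const_nhds (fun m => ?_)
    (fun m => (hmap.iterate m hz).2 i)
  have := one_sub_iterate_le_mul_pow hmap hM hdom hρ0 hρ hc0 hz hc m i
  linarith

end Domination

theorem multitype_branching_infinite_product_general
    (N : ℕ)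
    (h : (Fin N → ℝ) → (Fin N → ℝ))
    (hmap : Set.MapsTo h (Icc (0 : Fin N → ℝ) 1) (Icc (0 : Fin N → ℝ) 1))
    (M : Matrix (Fin N) (Fin N) ℝ)
    (hMnonneg : ∀ i j, 0 ≤ M i j)
    (hdom : ∀ z ∈ Icc (0 : Fin N → ℝ) 1, ∀ i,
      1 - h z i ≤ ∑ j, M i j * (1 - z j))
    (b : Fin N → ℝ) (hb : ∀ j, 0 < b j)
    (hMb : ∀ i, M.mulVec b i < b i)
    (K : (Fin N → ℝ) → ℝ)
    (hKpos : ∀ z ∈ Icc (0 : Fin N → ℝ) 1, 0 < K z ∧ K z ≤ 1)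
    (X : (Fin N → ℝ) → ℝ)
    (hXcont : ContinuousWithinAt X (Icc (0 : Fin N → ℝ) 1) 1)
    (hX1 : X 1 = 1)
    (hXeq : ∀ z ∈ Icc (0 : Fin N → ℝ) 1, X z = K z * X (h z)) :
    ∀ z ∈ Icc (0 : Fin N → ℝ) 1,
      Tendsto (fun m : ℕ => h^[m] z) atTop (nhds 1) ∧
      (Multipliable fun m : ℕ => K (h^[m] z)) ∧
      X z = ∏' m : ℕ, K (h^[m] z) := by
  intro z hz
  have hiter (m : ℕ) : h^[m] z ∈ Icc (0 : Fin N → ℝ) 1 := hmap.iterate m hz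
  have hlim := tendsto_iterate_nhds_one hmap hMnonneg hdom hb hMb hz
  have hK : Multipliable fun m => K (h^[m] z) :=
    Real.multipliable_of_nonneg_of_le_one (fun m => (hKpos _ (hiter m)).1.le)
      (fun m => (hKpos _ (hiter m)).2)
  exact ⟨hlim, hK, eq_tprod_of_tendsto_iterate hmap hXeq hXcont hX1 hz hlim hK⟩

/-- Theorem 3, abstract form: For a multi-type branching
functional equation `X z = K z · X (h z)` on `[0,1]^N`, with offspring map `h`
dominated towards `1` by a nonnegative matrix `M` admitting a positive vector
`b` with `M b < b` componentwise, and an immigration generating function `K`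
Lipschitz at `1`, the iterates `h^{(m)} z` converge to `1`, the infinite
product `∏_m K (h^{(m)} z)` converges, and `X z = ∏_m K (h^{(m)} z)`. -/
theorem multitype_branching_infinite_product
    (N : ℕ) (hN : 1 ≤ N)
    (h : (Fin N → ℝ) → (Fin N → ℝ))
    (hmap : Set.MapsTo h (Icc (0 : Fin N → ℝ) 1) (Icc (0 : Fin N → ℝ) 1))
    (hone : h 1 = 1)
    (M : Matrix (Fin N) (Fin N) ℝ)
    (hMnonneg : ∀ i j, 0 ≤ M i j)
    (hdom : ∀ z ∈ Icc (0 : Fin N → ℝ) 1, ∀ i,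
      1 - h z i ≤ ∑ j, M i j * (1 - z j))
    (b : Fin N → ℝ) (hb : ∀ j, 0 < b j)
    (hMb : ∀ i, M.mulVec b i < b i)
    (K : (Fin N → ℝ) → ℝ) (C : ℝ) (hC : 0 ≤ C)
    (hKpos : ∀ z ∈ Icc (0 : Fin N → ℝ) 1, 0 < K z ∧ K z ≤ 1)
    (hKlip : ∀ z ∈ Icc (0 : Fin N → ℝ) 1, 1 - K z ≤ C * ∑ j, (1 - z j))
    (X : (Fin N → ℝ) → ℝ)
    (hXcont : ContinuousWithinAt X (Icc (0 : Fin N → ℝ) 1) 1)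
    (hX1 : X 1 = 1)
    (hXeq : ∀ z ∈ Icc (0 : Fin N → ℝ) 1, X z = K z * X (h z)) :
    ∀ z ∈ Icc (0 : Fin N → ℝ) 1,
      Tendsto (fun m : ℕ => h^[m] z) atTop (nhds 1) ∧
      (Multipliable fun m : ℕ => K (h^[m] z)) ∧
      X z = ∏' m : ℕ, K (h^[m] z) :=
  multitype_branching_infinite_product_general N h hmap M hMnonneg hdom b hb hMb K hKpos X hXcont
    hX1 hXeq
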